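/- arXiv:0906.5052 — 3 statements merged into one kernel-verified Lean document; each statement's English description precedes it below -/
import Mathlib

section
/- (Lemma 3.1.) Fix a cyclic permutation (α,β,γ) of (1,2,3) and define the bilinear maps N_α, N*_α : V×V → V by N_α(x,y) = −[ω_γ(x)+ω_β(J_αx)]·J_γy − [ω_β(x)−ω_γ(J_αx)]·J_βy + [ω_γ(y)+ω_β(J_αy)]·J_γx + [ω_β(y)−ω_γ(J_αy)]·J_βx and N*_α(x,y) = −[ω_γ(x)+ω_β(J_αx)]·J_γy − [ω_β(x)−ω_γ(J_αx)]·J_βy − [ω_γ(y)+ω_β(J_αy)]·J_γx − [ω_β(y)−ω_γ(J_αy)]·J_βx. Then N_α = 0 and N*_α = 0 if and only if ω_γ = −ω_β∘J_α. -/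
/-!
Write `a y = ω_γ y + ω_β (J_α y)` and `b y = ω_β y - ω_γ (J_α y)`. Half the difference of
`N_α` and `N*_α` is `a y • J_γ x + b y • J_β x`, and this vanishes for all `x, y` iff both do.
Evaluating it at `x` and at `J_α x` gives `a J_γ x + b J_β x = 0` and `a J_β x - b J_γ x = 0`,
whence `(a² + b²) J_γ x = 0`; as `J_γ` is injective and `V ≠ 0`, `a = b = 0`. Finally
`b y = -a (J_α y)`, so the condition is just `a = 0`, i.e. `ω_γ = -ω_β ∘ J_α`.
-/

section Hypercomplex

variable {V : Type} [AddCommGroup V] [Module ℝ V]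

lemma forall_nijenhuis_pair_eq_zero_iff (Jβ Jγ : V →ₗ[ℝ] V) (a b : V → ℝ) :
    (∀ x y, -a x • Jγ y - b x • Jβ y + a y • Jγ x + b y • Jβ x = 0 ∧
        -a x • Jγ y - b x • Jβ y - a y • Jγ x - b y • Jβ x = 0) ↔
      ∀ x y, a y • Jγ x + b y • Jβ x = 0 := by
  constructor
  · intro h x y
    obtain ⟨hN, hN'⟩ := h x y
    linear_combination (norm := module) (2⁻¹ : ℝ) • (hN - hN')
  · intro h x y
    exact ⟨by linear_combination (norm := module) h x y - h y x,
      by linear_combination (norm := module) -h x y - h y x⟩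

lemma forall_smul_add_smul_eq_zero_iff [Nontrivial V] (Jα Jβ Jγ : V →ₗ[ℝ] V)
    (hγγ : ∀ x, Jγ (Jγ x) = -x)
    (hβ : ∀ x, Jβ x = Jγ (Jα x)) (hγ : ∀ x, Jγ x = -Jβ (Jα x)) (a b : ℝ) :
    (∀ x, a • Jγ x + b • Jβ x = 0) ↔ a = 0 ∧ b = 0 := by
  refine ⟨fun h => ?_, fun ⟨ha, hb⟩ x => by simp [ha, hb]⟩
  obtain ⟨x, hx⟩ := exists_ne (0 : V)
  have hJx : Jγ x ≠ 0 := fun h0 => hx <| by simpa [h0] using (hγγ x).symm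
  have hαx : a • Jβ x - b • Jγ x = 0 := by
    rw [hβ x, hγ x]
    simpa using h (Jα x)
  have hsq : (a ^ 2 + b ^ 2) • Jγ x = 0 := by
    linear_combination (norm := module) a • h x - b • hαx
  have : a ^ 2 + b ^ 2 = 0 := (smul_eq_zero.mp hsq).resolve_right hJx
  constructor <;> nlinarith [sq_nonneg a, sq_nonneg b]

lemma nijenhuis_pair_eq_zero_iff [Nontrivial V] (Jα Jβ Jγ : V →ₗ[ℝ] V)
    (hαα : ∀ x, Jα (Jα x) = -x) (hγγ : ∀ x, Jγ (Jγ x) = -x)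
    (hβ : ∀ x, Jβ x = Jγ (Jα x)) (hγ : ∀ x, Jγ x = -Jβ (Jα x)) (ωβ ωγ : V →ₗ[ℝ] ℝ) :
    (∀ x y, (-(ωγ x + ωβ (Jα x)) • Jγ y - (ωβ x - ωγ (Jα x)) • Jβ y
          + (ωγ y + ωβ (Jα y)) • Jγ x + (ωβ y - ωγ (Jα y)) • Jβ x) = 0 ∧
        (-(ωγ x + ωβ (Jα x)) • Jγ y - (ωβ x - ωγ (Jα x)) • Jβ y
          - (ωγ y + ωβ (Jα y)) • Jγ x - (ωβ y - ωγ (Jα y)) • Jβ x) = 0) ↔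
      ∀ x, ωγ x = -ωβ (Jα x) := by
  rw [forall_nijenhuis_pair_eq_zero_iff Jβ Jγ (fun y => ωγ y + ωβ (Jα y))
    (fun y => ωβ y - ωγ (Jα y)), forall_comm]
  simp only [forall_smul_add_smul_eq_zero_iff Jα Jβ Jγ hγγ hβ hγ]
  refine ⟨fun h y => by linarith [(h y).1], fun h y => ⟨by linarith [h y], ?_⟩⟩
  have hαy := h (Jα y)
  rw [hαα y, map_neg] at hαy
  linarith

end Hypercomplex

theorem stmt16_general
    (n : ℕ) (hn : 1 ≤ n)
    (V : Type) [AddCommGroup V] [Module ℝ V]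
    (hdim : Module.finrank ℝ V = 4 * n)
    (J1 J2 J3 : V →ₗ[ℝ] V)
    (hJ1 : ∀ x, J1 (J1 x) = -x) (hJ2 : ∀ x, J2 (J2 x) = -x) (hJ3 : ∀ x, J3 (J3 x) = -x)
    (h123 : ∀ x, J1 x = J2 (J3 x)) (h132 : ∀ x, J1 x = -J3 (J2 x))
    (h231 : ∀ x, J2 x = J3 (J1 x)) (h213 : ∀ x, J2 x = -J1 (J3 x))
    (h312 : ∀ x, J3 x = J1 (J2 x)) (h321 : ∀ x, J3 x = -J2 (J1 x))
    (ω1 ω2 ω3 : V →ₗ[ℝ] ℝ)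
    :
    ((∀ x y, (-(ω3 x + ω2 (J1 x)) • J3 y - (ω2 x - ω3 (J1 x)) • J2 y + (ω3 y + ω2 (J1 y)) • J3 x + (ω2 y - ω3 (J1 y)) • J2 x) = 0 ∧ (-(ω3 x + ω2 (J1 x)) • J3 y - (ω2 x - ω3 (J1 x)) • J2 y - (ω3 y + ω2 (J1 y)) • J3 x - (ω2 y - ω3 (J1 y)) • J2 x) = 0) ↔ (∀ x, ω3 x = -ω2 (J1 x))) ∧
    ((∀ x y, (-(ω1 x + ω3 (J2 x)) • J1 y - (ω3 x - ω1 (J2 x)) • J3 y + (ω1 y + ω3 (J2 y)) • J1 x + (ω3 y - ω1 (J2 y)) • J3 x) = 0 ∧ (-(ω1 x + ω3 (J2 x)) • J1 y - (ω3 x - ω1 (J2 x)) • J3 y - (ω1 y + ω3 (J2 y)) • J1 x - (ω3 y - ω1 (J2 y)) • J3 x) = 0) ↔ (∀ x, ω1 x = -ω3 (J2 x))) ∧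
    ((∀ x y, (-(ω2 x + ω1 (J3 x)) • J2 y - (ω1 x - ω2 (J3 x)) • J1 y + (ω2 y + ω1 (J3 y)) • J2 x + (ω1 y - ω2 (J3 y)) • J1 x) = 0 ∧ (-(ω2 x + ω1 (J3 x)) • J2 y - (ω1 x - ω2 (J3 x)) • J1 y - (ω2 y + ω1 (J3 y)) • J2 x - (ω1 y - ω2 (J3 y)) • J1 x) = 0) ↔ (∀ x, ω2 x = -ω1 (J3 x))) := by
  have : Nontrivial V := Module.nontrivial_of_finrank_pos (R := ℝ) (by omega)
  exact ⟨nijenhuis_pair_eq_zero_iff J1 J2 J3 hJ1 hJ3 h231 h321 ω2 ω3,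
    nijenhuis_pair_eq_zero_iff J2 J3 J1 hJ2 hJ1 h312 h132 ω3 ω1,
    nijenhuis_pair_eq_zero_iff J3 J1 J2 hJ3 hJ2 h123 h213 ω1 ω2⟩

theorem stmt16
    (n : ℕ) (hn : 1 ≤ n)
    (V : Type) [AddCommGroup V] [Module ℝ V] [FiniteDimensional ℝ V]
    (hdim : Module.finrank ℝ V = 4 * n)
    (J1 J2 J3 : V →ₗ[ℝ] V)
    (hJ1 : ∀ x, J1 (J1 x) = -x) (hJ2 : ∀ x, J2 (J2 x) = -x) (hJ3 : ∀ x, J3 (J3 x) = -x)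
    (h123 : ∀ x, J1 x = J2 (J3 x)) (h132 : ∀ x, J1 x = -J3 (J2 x))
    (h231 : ∀ x, J2 x = J3 (J1 x)) (h213 : ∀ x, J2 x = -J1 (J3 x))
    (h312 : ∀ x, J3 x = J1 (J2 x)) (h321 : ∀ x, J3 x = -J2 (J1 x))
    (ω1 ω2 ω3 : V →ₗ[ℝ] ℝ)
    :
    ((∀ x y, (-(ω3 x + ω2 (J1 x)) • J3 y - (ω2 x - ω3 (J1 x)) • J2 y + (ω3 y + ω2 (J1 y)) • J3 x + (ω2 y - ω3 (J1 y)) • J2 x) = 0 ∧ (-(ω3 x + ω2 (J1 x)) • J3 y - (ω2 x - ω3 (J1 x)) • J2 y - (ω3 y + ω2 (J1 y)) • J3 x - (ω2 y - ω3 (J1 y)) • J2 x) = 0) ↔ (∀ x, ω3 x = -ω2 (J1 x))) ∧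
    ((∀ x y, (-(ω1 x + ω3 (J2 x)) • J1 y - (ω3 x - ω1 (J2 x)) • J3 y + (ω1 y + ω3 (J2 y)) • J1 x + (ω3 y - ω1 (J2 y)) • J3 x) = 0 ∧ (-(ω1 x + ω3 (J2 x)) • J1 y - (ω3 x - ω1 (J2 x)) • J3 y - (ω1 y + ω3 (J2 y)) • J1 x - (ω3 y - ω1 (J2 y)) • J3 x) = 0) ↔ (∀ x, ω1 x = -ω3 (J2 x))) ∧
    ((∀ x y, (-(ω2 x + ω1 (J3 x)) • J2 y - (ω1 x - ω2 (J3 x)) • J1 y + (ω2 y + ω1 (J3 y)) • J2 x + (ω1 y - ω2 (J3 y)) • J1 x) = 0 ∧ (-(ω2 x + ω1 (J3 x)) • J2 y - (ω1 x - ω2 (J3 x)) • J1 y - (ω2 y + ω1 (J3 y)) • J2 x - (ω1 y - ω2 (J3 y)) • J1 x) = 0) ↔ (∀ x, ω2 x = -ω1 (J3 x))) :=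
  stmt16_general n hn V hdim J1 J2 J3 hJ1 hJ2 hJ3 h123 h132 h231 h213 h312 h321 ω1 ω2 ω3
end

section
/- (Lemma 3.2.) For each cyclic permutation (α,β,γ) of (1,2,3) define N_α, N*_α : V×V → V by N_α(x,y) = −[ω_γ(x)+ω_β(J_αx)]·J_γy − [ω_β(x)−ω_γ(J_αx)]·J_βy + [ω_γ(y)+ω_β(J_αy)]·J_γx + [ω_β(y)−ω_γ(J_αy)]·J_βx and N*_α(x,y) = −[ω_γ(x)+ω_β(J_αx)]·J_γy − [ω_β(x)−ω_γ(J_αx)]·J_βy − [ω_γ(y)+ω_β(J_αy)]·J_γx − [ω_β(y)−ω_γ(J_αy)]·J_βx. Then N_α = 0 and N*_α = 0 for all α ∈ {1,2,3} if and only if ω_α = ω_β∘J_γ = −ω_γ∘J_β holds for every cyclic permutation (α,β,γ) of (1,2,3). -/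
/-!
With `a = ω_γ + ω_β ∘ J_α` and `b = ω_β - ω_γ ∘ J_α`, the system says `a = b = 0`, which makes
`N_α` and `N*_α` vanish. Conversely `N*_α(x, x) = -2 (a(x) • J_γ x + b(x) • J_β x)`, and for
`x ≠ 0` the vectors `J_γ x`, `J_β x` are linearly independent: `J_γ` maps them to `-x` and
`-J_α x`, and `x`, `J_α x` are independent because `J_α² = -1` has no real eigenvalue.
-/

section

variable {V : Type*} [AddCommGroup V] [Module ℝ V]

lemma eq_zero_of_smul_add_smul_apply_eq_zero {J : V →ₗ[ℝ] V} (hJ : ∀ x, J (J x) = -x)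
    {a b : ℝ} {y : V} (hy : y ≠ 0) (h : a • y + b • J y = 0) : a = 0 ∧ b = 0 := by
  have hJh : a • J y - b • y = 0 := by
    simpa [hJ, sub_eq_add_neg] using congrArg J h
  have hsq : (a ^ 2 + b ^ 2) • y = 0 := by
    calc (a ^ 2 + b ^ 2) • y = a • (a • y + b • J y) - b • (a • J y - b • y) := by module
      _ = 0 := by rw [h, hJh, smul_zero, smul_zero, sub_zero]
  have hab : a ^ 2 + b ^ 2 = 0 := (smul_eq_zero.mp hsq).resolve_right hy
  constructor <;> nlinarith [sq_nonneg a, sq_nonneg b]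

lemma eq_zero_of_smul_add_smul_eq_zero {Jα Jβ Jγ : V →ₗ[ℝ] V} (hJα : ∀ x, Jα (Jα x) = -x)
    (hJγ : ∀ x, Jγ (Jγ x) = -x) (hαγβ : ∀ x, Jα x = -Jγ (Jβ x))
    {a b : ℝ} {y : V} (hy : y ≠ 0) (h : a • Jγ y + b • Jβ y = 0) : a = 0 ∧ b = 0 := by
  refine eq_zero_of_smul_add_smul_apply_eq_zero hJα hy ?_
  have hJγh : a • Jγ (Jγ y) + b • Jγ (Jβ y) = 0 := by simpa using congrArg Jγ h
  rw [hJγ, ← neg_neg (Jγ (Jβ y)), ← hαγβ] at hJγh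
  calc a • y + b • Jα y = -(a • -y + b • -Jα y) := by module
    _ = 0 := by rw [hJγh, neg_zero]

lemma nijenhuis_eq_zero_iff {Jα Jβ Jγ : V →ₗ[ℝ] V} (hJα : ∀ x, Jα (Jα x) = -x)
    (hJγ : ∀ x, Jγ (Jγ x) = -x) (hαγβ : ∀ x, Jα x = -Jγ (Jβ x)) (ωβ ωγ : V →ₗ[ℝ] ℝ) :
    ((∀ x y, (-(ωγ x + ωβ (Jα x)) • Jγ y - (ωβ x - ωγ (Jα x)) • Jβ y
        + (ωγ y + ωβ (Jα y)) • Jγ x + (ωβ y - ωγ (Jα y)) • Jβ x) = 0) ∧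
      (∀ x y, (-(ωγ x + ωβ (Jα x)) • Jγ y - (ωβ x - ωγ (Jα x)) • Jβ y
        - (ωγ y + ωβ (Jα y)) • Jγ x - (ωβ y - ωγ (Jα y)) • Jβ x) = 0)) ↔
      ∀ x, ωγ x = -ωβ (Jα x) ∧ ωβ x = ωγ (Jα x) := by
  constructor
  · rintro ⟨-, hNstar⟩ x
    suffices ωγ x + ωβ (Jα x) = 0 ∧ ωβ x - ωγ (Jα x) = 0 by
      constructor <;> linarith [this.1, this.2]
    rcases eq_or_ne x 0 with rfl | hx
    · simp
    refine eq_zero_of_smul_add_smul_eq_zero hJα hJγ hαγβ hx ?_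
    calc (ωγ x + ωβ (Jα x)) • Jγ x + (ωβ x - ωγ (Jα x)) • Jβ x
        = -(1 / 2 : ℝ) • ((-(ωγ x + ωβ (Jα x)) • Jγ x - (ωβ x - ωγ (Jα x)) • Jβ x
          - (ωγ x + ωβ (Jα x)) • Jγ x - (ωβ x - ωγ (Jα x)) • Jβ x)) := by module
      _ = 0 := by rw [hNstar, smul_zero]
  · intro hω
    have hγ : ∀ x, ωγ x + ωβ (Jα x) = 0 := fun x => by rw [(hω x).1]; ring
    have hβ : ∀ x, ωβ x - ωγ (Jα x) = 0 := fun x => by rw [(hω x).2]; ring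
    constructor <;> intro x y <;> simp [hβ, hγ]

end

theorem stmt17_general
    (V : Type) [AddCommGroup V] [Module ℝ V]
    (J1 J2 J3 : V →ₗ[ℝ] V)
    (hJ1 : ∀ x, J1 (J1 x) = -x) (hJ2 : ∀ x, J2 (J2 x) = -x) (hJ3 : ∀ x, J3 (J3 x) = -x)
    (h132 : ∀ x, J1 x = -J3 (J2 x))
    (h213 : ∀ x, J2 x = -J1 (J3 x))
    (h321 : ∀ x, J3 x = -J2 (J1 x))
    (ω1 ω2 ω3 : V →ₗ[ℝ] ℝ)
    :
    ((∀ x y, (-(ω3 x + ω2 (J1 x)) • J3 y - (ω2 x - ω3 (J1 x)) • J2 y + (ω3 y + ω2 (J1 y)) • J3 x + (ω2 y - ω3 (J1 y)) • J2 x) = 0) ∧ (∀ x y, (-(ω3 x + ω2 (J1 x)) • J3 y - (ω2 x - ω3 (J1 x)) • J2 y - (ω3 y + ω2 (J1 y)) • J3 x - (ω2 y - ω3 (J1 y)) • J2 x) = 0) ∧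
     (∀ x y, (-(ω1 x + ω3 (J2 x)) • J1 y - (ω3 x - ω1 (J2 x)) • J3 y + (ω1 y + ω3 (J2 y)) • J1 x + (ω3 y - ω1 (J2 y)) • J3 x) = 0) ∧ (∀ x y, (-(ω1 x + ω3 (J2 x)) • J1 y - (ω3 x - ω1 (J2 x)) • J3 y - (ω1 y + ω3 (J2 y)) • J1 x - (ω3 y - ω1 (J2 y)) • J3 x) = 0) ∧
     (∀ x y, (-(ω2 x + ω1 (J3 x)) • J2 y - (ω1 x - ω2 (J3 x)) • J1 y + (ω2 y + ω1 (J3 y)) • J2 x + (ω1 y - ω2 (J3 y)) • J1 x) = 0) ∧ (∀ x y, (-(ω2 x + ω1 (J3 x)) • J2 y - (ω1 x - ω2 (J3 x)) • J1 y - (ω2 y + ω1 (J3 y)) • J2 x - (ω1 y - ω2 (J3 y)) • J1 x) = 0)) ↔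
    ((∀ x, ω1 x = ω2 (J3 x)) ∧ (∀ x, ω1 x = -ω3 (J2 x)) ∧
     (∀ x, ω2 x = ω3 (J1 x)) ∧ (∀ x, ω2 x = -ω1 (J3 x)) ∧
     (∀ x, ω3 x = ω1 (J2 x)) ∧ (∀ x, ω3 x = -ω2 (J1 x))) := by
  have hN1 := nijenhuis_eq_zero_iff hJ1 hJ3 h132 ω2 ω3
  have hN2 := nijenhuis_eq_zero_iff hJ2 hJ1 h213 ω3 ω1
  have hN3 := nijenhuis_eq_zero_iff hJ3 hJ2 h321 ω1 ω2
  simp only [forall_and] at hN1 hN2 hN3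
  tauto

theorem stmt17
    (n : ℕ) (hn : 1 ≤ n)
    (V : Type) [AddCommGroup V] [Module ℝ V] [FiniteDimensional ℝ V]
    (hdim : Module.finrank ℝ V = 4 * n)
    (J1 J2 J3 : V →ₗ[ℝ] V)
    (hJ1 : ∀ x, J1 (J1 x) = -x) (hJ2 : ∀ x, J2 (J2 x) = -x) (hJ3 : ∀ x, J3 (J3 x) = -x)
    (h123 : ∀ x, J1 x = J2 (J3 x)) (h132 : ∀ x, J1 x = -J3 (J2 x))
    (h231 : ∀ x, J2 x = J3 (J1 x)) (h213 : ∀ x, J2 x = -J1 (J3 x))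
    (h312 : ∀ x, J3 x = J1 (J2 x)) (h321 : ∀ x, J3 x = -J2 (J1 x))
    (ω1 ω2 ω3 : V →ₗ[ℝ] ℝ)
    :
    ((∀ x y, (-(ω3 x + ω2 (J1 x)) • J3 y - (ω2 x - ω3 (J1 x)) • J2 y + (ω3 y + ω2 (J1 y)) • J3 x + (ω2 y - ω3 (J1 y)) • J2 x) = 0) ∧ (∀ x y, (-(ω3 x + ω2 (J1 x)) • J3 y - (ω2 x - ω3 (J1 x)) • J2 y - (ω3 y + ω2 (J1 y)) • J3 x - (ω2 y - ω3 (J1 y)) • J2 x) = 0) ∧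
     (∀ x y, (-(ω1 x + ω3 (J2 x)) • J1 y - (ω3 x - ω1 (J2 x)) • J3 y + (ω1 y + ω3 (J2 y)) • J1 x + (ω3 y - ω1 (J2 y)) • J3 x) = 0) ∧ (∀ x y, (-(ω1 x + ω3 (J2 x)) • J1 y - (ω3 x - ω1 (J2 x)) • J3 y - (ω1 y + ω3 (J2 y)) • J1 x - (ω3 y - ω1 (J2 y)) • J3 x) = 0) ∧
     (∀ x y, (-(ω2 x + ω1 (J3 x)) • J2 y - (ω1 x - ω2 (J3 x)) • J1 y + (ω2 y + ω1 (J3 y)) • J2 x + (ω1 y - ω2 (J3 y)) • J1 x) = 0) ∧ (∀ x y, (-(ω2 x + ω1 (J3 x)) • J2 y - (ω1 x - ω2 (J3 x)) • J1 y - (ω2 y + ω1 (J3 y)) • J2 x - (ω1 y - ω2 (J3 y)) • J1 x) = 0)) ↔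
    ((∀ x, ω1 x = ω2 (J3 x)) ∧ (∀ x, ω1 x = -ω3 (J2 x)) ∧
     (∀ x, ω2 x = ω3 (J1 x)) ∧ (∀ x, ω2 x = -ω1 (J3 x)) ∧
     (∀ x, ω3 x = ω1 (J2 x)) ∧ (∀ x, ω3 x = -ω2 (J1 x))) :=
  stmt17_general V J1 J2 J3 hJ1 hJ2 hJ3 h132 h213 h321 ω1 ω2 ω3
end

section
/- (Algebraic core of Proposition 3.5.) For each cyclic permutation (α,β,γ) of (1,2,3), let F_α(x,y,z) := ω_γ(x)·g(J_βy,z) − ω_β(x)·g(J_γy,z) and θ_α(z) := −ε_β·ω_γ(J_βz) + ε_γ·ω_β(J_γz). Suppose that for α = 2 and α = 3 the class W₁⊕W₃ condition holds: 𝔖_{x,y,z} F_α(x,y,z) = (1/(2n))·𝔖_{x,y,z} { g(x,y)·θ_α(z) + g(J_αx,y)·θ_α(J_αz) } for all x,y,z ∈ V, where 𝔖_{x,y,z} denotes the cyclic sum over x,y,z. Then ω₂ = ω₃ = 0; consequently F₁ = 0, F₂(x,y,z) = ω₁(x)·g(J₃y,z), F₃(x,y,z) = −ω₁(x)·g(J₂y,z),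 θ₂ = ω₁∘J₃ and θ₃ = −ω₁∘J₂. -/
/-!
Antisymmetrising the defining identity of `W₁ ⊕ W₃` for `F₂` (resp. `F₃`) in its last two
arguments kills the right-hand side, which is symmetric there, and kills the part of `F_α` built
from the symmetric forms `g(J₂·,·)`, `g(J₃·,·)`. What is left says that the cyclic sum of
`ω₃ ⊗ Ω` (resp. `ω₂ ⊗ Ω`) vanishes, where `Ω = g(J₁·,·)` is a nondegenerate 2-form, i.e.
`ω₃ ∧ Ω = 0`. In dimension `> 2` this forces the 1-form `B` to vanish: if `B v ≠ 0`, the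
identity at `(v, x, y)` shows that every `x` with `B x = 0` and `Ω v x = 0` is `Ω`-orthogonal to
everything, so `x ↦ (B x, Ω v x)` is injective.
-/

open Module

section Compatible

variable {R V : Type*} [CommRing R] [AddCommGroup V] [Module R V]

theorem LinearMap.apply_map_swap {g : V →ₗ[R] V →ₗ[R] R} (hg : ∀ x y, g x y = g y x)
    {J : V →ₗ[R] V} (hJ : ∀ x, J (J x) = -x) {ε : R} (hgJ : ∀ x y, g (J x) (J y) = ε * g x y)
    (x y : V) : g (J x) y = -ε * g (J y) x := by
  have h := hgJ x (J y)
  rw [hJ, map_neg, hg x] at h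
  linear_combination -h

theorem LinearMap.SeparatingLeft.comp_injective {g : V →ₗ[R] V →ₗ[R] R} (hg : g.SeparatingLeft)
    {J : V →ₗ[R] V} (hJ : Function.Injective J) : (g ∘ₗ J).SeparatingLeft :=
  fun x hx => hJ (by simpa using hg (J x) hx)

end Compatible

section CyclicSum

variable {V : Type*}

def cyclicSum {R : Type*} [Add R] (F : V → V → V → R) (x y z : V) : R :=
  F x y z + F y z x + F z x y

variable {K : Type*} [Field K]

theorem cyclicSum_mul_eq_zero_of_eq {F G : V → V → V → K} {B : V → K} {Ω : V → V → K}
    {k : K} (hk : k ≠ 0) (hF : ∀ x y z, F x y z - F x z y = k * (B x * Ω y z))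
    (hG : ∀ x y z, G x y z = G y x z) {c : K}
    (h : ∀ x y z, cyclicSum F x y z = c * cyclicSum G x y z) (x y z : V) :
    cyclicSum (fun x y z => B x * Ω y z) x y z = 0 := by
  have hsymm : cyclicSum F x y z = cyclicSum F x z y := by
    rw [h, h]
    unfold cyclicSum
    rw [hG x y z, hG y z x, hG z x y]
    ring
  refine (mul_eq_zero.mp ?_).resolve_left hk
  unfold cyclicSum at hsymm ⊢
  linear_combination -(hF x y z) - hF y z x - hF z x y + hsymm

variable [AddCommGroup V] [Module K V]

theorem LinearMap.eq_zero_of_cyclicSum_mul_eq_zero (hV : 2 < finrank K V)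
    {Ω : V →ₗ[K] V →ₗ[K] K} (hΩ : Ω.SeparatingLeft) {B : V →ₗ[K] K}
    (h : ∀ x y z, cyclicSum (fun x y z => B x * Ω y z) x y z = 0) : B = 0 := by
  by_contra hB
  obtain ⟨v, hv⟩ : ∃ v, B v ≠ 0 := by
    by_contra! hB'
    exact hB (LinearMap.ext hB')
  have hinj : Function.Injective (B.prod (Ω v)) := by
    rw [← LinearMap.ker_eq_bot, Submodule.eq_bot_iff]
    intro x hx
    simp only [LinearMap.mem_ker, LinearMap.prod_apply, Function.prod_apply,
      Prod.mk_eq_zero] at hx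
    refine hΩ x fun y => ?_
    have hvxy := h v x y
    simp only [cyclicSum, hx.1, hx.2] at hvxy
    simpa [hv] using hvxy
  have := LinearMap.finrank_le_finrank_of_injective hinj
  simp only [finrank_prod, finrank_self] at this
  omega

end CyclicSum

theorem stmt19_general
    (n : ℕ) (hn : 1 ≤ n)
    (V : Type) [AddCommGroup V] [Module ℝ V]
    (hdim : Module.finrank ℝ V = 4 * n)
    (J1 J2 J3 : V →ₗ[ℝ] V)
    (hJ1 : ∀ x, J1 (J1 x) = -x) (hJ2 : ∀ x, J2 (J2 x) = -x) (hJ3 : ∀ x, J3 (J3 x) = -x)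
    (g : V →ₗ[ℝ] V →ₗ[ℝ] ℝ)
    (hgsymm : ∀ x y, g x y = g y x)
    (hgnd : ∀ x, (∀ y, g x y = 0) → x = 0)
    (hgJ1 : ∀ x y, g (J1 x) (J1 y) = g x y)
    (hgJ2 : ∀ x y, g (J2 x) (J2 y) = -g x y)
    (hgJ3 : ∀ x y, g (J3 x) (J3 y) = -g x y)
    (ω1 ω2 ω3 : V →ₗ[ℝ] ℝ)
    (hW2 : ∀ x y z,
      ((ω1 x * g (J3 y) z - ω3 x * g (J1 y) z) +
       (ω1 y * g (J3 z) x - ω3 y * g (J1 z) x) +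
       (ω1 z * g (J3 x) y - ω3 z * g (J1 x) y)) =
      (1 / (2 * (n : ℝ))) *
        ((g x y * (ω1 (J3 z) + ω3 (J1 z)) + g (J2 x) y * (ω1 (J3 (J2 z)) + ω3 (J1 (J2 z)))) +
         (g y z * (ω1 (J3 x) + ω3 (J1 x)) + g (J2 y) z * (ω1 (J3 (J2 x)) + ω3 (J1 (J2 x)))) +
         (g z x * (ω1 (J3 y) + ω3 (J1 y)) + g (J2 z) x * (ω1 (J3 (J2 y)) + ω3 (J1 (J2 y))))))
    (hW3 : ∀ x y z,
      ((ω2 x * g (J1 y) z - ω1 x * g (J2 y) z) +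
       (ω2 y * g (J1 z) x - ω1 y * g (J2 z) x) +
       (ω2 z * g (J1 x) y - ω1 z * g (J2 x) y)) =
      (1 / (2 * (n : ℝ))) *
        ((g x y * (-ω2 (J1 z) - ω1 (J2 z)) + g (J3 x) y * (-ω2 (J1 (J3 z)) - ω1 (J2 (J3 z)))) +
         (g y z * (-ω2 (J1 x) - ω1 (J2 x)) + g (J3 y) z * (-ω2 (J1 (J3 x)) - ω1 (J2 (J3 x)))) +
         (g z x * (-ω2 (J1 y) - ω1 (J2 y)) + g (J3 z) x * (-ω2 (J1 (J3 y)) - ω1 (J2 (J3 y)))))) :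
    (∀ x, ω2 x = 0) ∧ (∀ x, ω3 x = 0) ∧
    (∀ x y z, ω3 x * g (J2 y) z - ω2 x * g (J3 y) z = 0) ∧
    (∀ x y z, ω1 x * g (J3 y) z - ω3 x * g (J1 y) z = ω1 x * g (J3 y) z) ∧
    (∀ x y z, ω2 x * g (J1 y) z - ω1 x * g (J2 y) z = -(ω1 x) * g (J2 y) z) ∧
    (∀ z, ω1 (J3 z) + ω3 (J1 z) = ω1 (J3 z)) ∧
    (∀ z, -ω2 (J1 z) - ω1 (J2 z) = -ω1 (J2 z)) := by
  have skew1 := LinearMap.apply_map_swap hgsymm hJ1 (ε := 1) (by simpa using hgJ1)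
  have symm2 := LinearMap.apply_map_swap hgsymm hJ2 (ε := -1) (by simpa using hgJ2)
  have symm3 := LinearMap.apply_map_swap hgsymm hJ3 (ε := -1) (by simpa using hgJ3)
  have hΩ : (g ∘ₗ J1).SeparatingLeft :=
    LinearMap.SeparatingLeft.comp_injective hgnd fun x y hxy => by
      simpa [hJ1] using congrArg J1 hxy
  have hV : 2 < finrank ℝ V := by omega
  have hω3 : ω3 = 0 := by
    refine LinearMap.eq_zero_of_cyclicSum_mul_eq_zero hV hΩ fun x y z => ?_
    refine cyclicSum_mul_eq_zero_of_eq (k := -2) (by norm_num)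
      (F := fun x y z => ω1 x * g (J3 y) z - ω3 x * g (J1 y) z)
      (G := fun x y z => g x y * (ω1 (J3 z) + ω3 (J1 z))
        + g (J2 x) y * (ω1 (J3 (J2 z)) + ω3 (J1 (J2 z))))
      (fun x y z => ?_) (fun x y z => ?_) hW2 x y z
    · linear_combination ω1 x * symm3 y z + ω3 x * skew1 z y
    · linear_combination (ω1 (J3 z) + ω3 (J1 z)) * hgsymm x y
        + (ω1 (J3 (J2 z)) + ω3 (J1 (J2 z))) * symm2 x y
  have hω2 : ω2 = 0 := by
    refine LinearMap.eq_zero_of_cyclicSum_mul_eq_zero hV hΩ fun x y z => ?_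
    refine cyclicSum_mul_eq_zero_of_eq (k := 2) (by norm_num)
      (F := fun x y z => ω2 x * g (J1 y) z - ω1 x * g (J2 y) z)
      (G := fun x y z => g x y * (-ω2 (J1 z) - ω1 (J2 z))
        + g (J3 x) y * (-ω2 (J1 (J3 z)) - ω1 (J2 (J3 z))))
      (fun x y z => ?_) (fun x y z => ?_) hW3 x y z
    · linear_combination -(ω1 x * symm2 y z) - ω2 x * skew1 z y
    · linear_combination (-ω2 (J1 z) - ω1 (J2 z)) * hgsymm x y
        + (-ω2 (J1 (J3 z)) - ω1 (J2 (J3 z))) * symm3 x y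
  subst hω2 hω3
  simp

theorem stmt19
    (n : ℕ) (hn : 1 ≤ n)
    (V : Type) [AddCommGroup V] [Module ℝ V] [FiniteDimensional ℝ V]
    (hdim : Module.finrank ℝ V = 4 * n)
    (J1 J2 J3 : V →ₗ[ℝ] V)
    (hJ1 : ∀ x, J1 (J1 x) = -x) (hJ2 : ∀ x, J2 (J2 x) = -x) (hJ3 : ∀ x, J3 (J3 x) = -x)
    (h123 : ∀ x, J1 x = J2 (J3 x)) (h132 : ∀ x, J1 x = -J3 (J2 x))
    (h231 : ∀ x, J2 x = J3 (J1 x)) (h213 : ∀ x, J2 x = -J1 (J3 x))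
    (h312 : ∀ x, J3 x = J1 (J2 x)) (h321 : ∀ x, J3 x = -J2 (J1 x))
    (g : V →ₗ[ℝ] V →ₗ[ℝ] ℝ)
    (hgsymm : ∀ x y, g x y = g y x)
    (hgnd : ∀ x, (∀ y, g x y = 0) → x = 0)
    (hgJ1 : ∀ x y, g (J1 x) (J1 y) = g x y)
    (hgJ2 : ∀ x y, g (J2 x) (J2 y) = -g x y)
    (hgJ3 : ∀ x y, g (J3 x) (J3 y) = -g x y)
    (ω1 ω2 ω3 : V →ₗ[ℝ] ℝ)
    (hW2 : ∀ x y z,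
      ((ω1 x * g (J3 y) z - ω3 x * g (J1 y) z) +
       (ω1 y * g (J3 z) x - ω3 y * g (J1 z) x) +
       (ω1 z * g (J3 x) y - ω3 z * g (J1 x) y)) =
      (1 / (2 * (n : ℝ))) *
        ((g x y * (ω1 (J3 z) + ω3 (J1 z)) + g (J2 x) y * (ω1 (J3 (J2 z)) + ω3 (J1 (J2 z)))) +
         (g y z * (ω1 (J3 x) + ω3 (J1 x)) + g (J2 y) z * (ω1 (J3 (J2 x)) + ω3 (J1 (J2 x)))) +
         (g z x * (ω1 (J3 y) + ω3 (J1 y)) + g (J2 z) x * (ω1 (J3 (J2 y)) + ω3 (J1 (J2 y))))))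
    (hW3 : ∀ x y z,
      ((ω2 x * g (J1 y) z - ω1 x * g (J2 y) z) +
       (ω2 y * g (J1 z) x - ω1 y * g (J2 z) x) +
       (ω2 z * g (J1 x) y - ω1 z * g (J2 x) y)) =
      (1 / (2 * (n : ℝ))) *
        ((g x y * (-ω2 (J1 z) - ω1 (J2 z)) + g (J3 x) y * (-ω2 (J1 (J3 z)) - ω1 (J2 (J3 z)))) +
         (g y z * (-ω2 (J1 x) - ω1 (J2 x)) + g (J3 y) z * (-ω2 (J1 (J3 x)) - ω1 (J2 (J3 x)))) +
         (g z x * (-ω2 (J1 y) - ω1 (J2 y)) + g (J3 z) x * (-ω2 (J1 (J3 y)) - ω1 (J2 (J3 y)))))) :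
    (∀ x, ω2 x = 0) ∧ (∀ x, ω3 x = 0) ∧
    (∀ x y z, ω3 x * g (J2 y) z - ω2 x * g (J3 y) z = 0) ∧
    (∀ x y z, ω1 x * g (J3 y) z - ω3 x * g (J1 y) z = ω1 x * g (J3 y) z) ∧
    (∀ x y z, ω2 x * g (J1 y) z - ω1 x * g (J2 y) z = -(ω1 x) * g (J2 y) z) ∧
    (∀ z, ω1 (J3 z) + ω3 (J1 z) = ω1 (J3 z)) ∧
    (∀ z, -ω2 (J1 z) - ω1 (J2 z) = -ω1 (J2 z)) :=
  stmt19_general n hn V hdim J1 J2 J3 hJ1 hJ2 hJ3 g hgsymm hgnd hgJ1 hgJ2 hgJ3 ω1 ω2 ω3 hW2 hW3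
end
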